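/- Let G be a minimal non-sofic group. Then for every element x of G not lying in the center Z(G), the conjugacy class of x in G is infinite. -/
import Mathlib


/-- The normalized Hamming distance between two permutations of `Fin n`:
the number of points where they differ, divided by `n`. -/
noncomputable def permHammingDist {n : ℕ} (σ τ : Equiv.Perm (Fin n)) : ℝ :=
  ((Finset.univ.filter fun i => σ i ≠ τ i).card : ℝ) / n

/-- A group `G` is sofic if for every finite subset `F ⊆ G` and every `ε > 0` there exist
`n ≥ 1` and a map `θ` from `F` to `Sym(Fin n)` (extended to all of `G`) such that:
(i) `θ` is an `ε`-approximate homomorphism on `F`;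
(ii) `θ` almost sends the identity to the identity;
(iii) distinct elements of `F` are sent to permutations at Hamming distance at least `1/4`. -/
def IsSofic (G : Type*) [Group G] : Prop :=
  ∀ (F : Finset G) (ε : ℝ), 0 < ε →
    ∃ n : ℕ, 1 ≤ n ∧ ∃ θ : G → Equiv.Perm (Fin n),
      (∀ g h : G, g ∈ F → h ∈ F → g * h ∈ F →
        permHammingDist (θ g * θ h) (θ (g * h)) < ε) ∧
      ((1 : G) ∈ F → permHammingDist (θ 1) 1 < ε) ∧
      (∀ x y : G, x ∈ F → y ∈ F → x ≠ y → 1 / 4 ≤ permHammingDist (θ x) (θ y))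

/-- A group is minimal non-sofic if it is not sofic but every proper subgroup is sofic. -/
def IsMinimalNonSofic (G : Type*) [Group G] : Prop :=
  ¬ IsSofic G ∧ ∀ H : Subgroup G, H ≠ ⊤ → IsSofic H

/-! ### Auxiliary machinery: soficity passes from a finite-index subgroup to the group -/

theorem SoficAux.mk_mul_out {G : Type*} [Group G] (H : Subgroup G) (g : G) (q : G ⧸ H) :
    QuotientGroup.mk (g * Quotient.out q) = g • q :=
  MulAction.Quotient.mk_smul_out H g q

/-- The cocycle associated to the transversal given by `Quotient.out`. -/
noncomputable def SoficAux.cocyc {G : Type*} [Group G] (H : Subgroup G) (g : G) (q : G ⧸ H) :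
    H :=
  ⟨(Quotient.out (g • q))⁻¹ * (g * Quotient.out q), by
    rw [← QuotientGroup.eq, QuotientGroup.out_eq', SoficAux.mk_mul_out]⟩

namespace SoficAux

theorem cocyc_mul {G : Type*} [Group G] (H : Subgroup G) (g h : G) (q : G ⧸ H) :
    cocyc H (g * h) q = cocyc H g (h • q) * cocyc H h q := by
  ext
  simp only [cocyc, Subgroup.coe_mul, mul_smul]
  group

theorem cocyc_one {G : Type*} [Group G] (H : Subgroup G) (q : G ⧸ H) :
    cocyc H 1 q = 1 := by
  ext; simp [cocyc]

theorem cocyc_injective {G : Type*} [Group G] (H : Subgroup G) {g g' : G} {q : G ⧸ H}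
    (h1 : g • q = g' • q) (h2 : cocyc H g q = cocyc H g' q) : g = g' := by
  have := congrArg (Subtype.val) h2
  simp only [cocyc, h1] at this
  exact mul_right_cancel (mul_left_cancel this)

/-- The induced permutation on `(G ⧸ H) × Fin n`. -/
noncomputable def inducedPerm {G : Type*} [Group G] (H : Subgroup G) {n : ℕ}
    (θ : H → Equiv.Perm (Fin n)) (g : G) : Equiv.Perm ((G ⧸ H) × Fin n) where
  toFun p := (g • p.1, θ (cocyc H g p.1) p.2)
  invFun p := (g⁻¹ • p.1, (θ (cocyc H g (g⁻¹ • p.1)))⁻¹ p.2)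
  left_inv p := by simp
  right_inv p := by simp

@[simp] theorem inducedPerm_apply {G : Type*} [Group G] (H : Subgroup G) {n : ℕ}
    (θ : H → Equiv.Perm (Fin n)) (g : G) (p : (G ⧸ H) × Fin n) :
    inducedPerm H θ g p = (g • p.1, θ (cocyc H g p.1) p.2) := rfl

/-- Fiberwise counting for filters on a product type. -/
theorem card_filter_prod {Q I : Type*} [Fintype Q] [Fintype I] [DecidableEq Q]
    (P : Q × I → Prop) [DecidablePred P] :
    (Finset.univ.filter P).card = ∑ q : Q, (Finset.univ.filter fun i => P (q, i)).card := by
  rw [Finset.card_eq_sum_card_fiberwise (f := Prod.fst) (t := Finset.univ)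
    (fun x _ => Finset.mem_univ _)]
  refine Finset.sum_congr rfl fun q _ => ?_
  refine Finset.card_bij' (fun p _ => p.2) (fun i _ => (q, i)) ?_ ?_ ?_ ?_
  · intro p hp
    simp only [Finset.mem_filter, Finset.mem_univ, true_and] at hp ⊢
    obtain ⟨h1, h2⟩ := hp
    subst h2
    exact h1
  · intro i hi
    simp only [Finset.mem_filter, Finset.mem_univ, true_and] at hi ⊢
    exact ⟨hi, trivial⟩
  · intro p hp
    simp only [Finset.mem_filter, Finset.mem_univ, true_and] at hp
    show (q, p.2) = p
    rw [← hp.2]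
  · intro i _
    rfl

/-- Transporting the Hamming distance along an equivalence with `Fin (card α)`. -/
theorem permHammingDist_permCongr {α : Type*} [Fintype α] [DecidableEq α]
    (e : α ≃ Fin (Fintype.card α)) (σ τ : Equiv.Perm α) :
    permHammingDist (e.permCongr σ) (e.permCongr τ)
      = ((Finset.univ.filter fun a => σ a ≠ τ a).card : ℝ) / (Fintype.card α) := by
  unfold permHammingDist
  congr 1
  norm_cast
  refine Finset.card_bij' (fun i _ => e.symm i) (fun a _ => e a) ?_ ?_ ?_ ?_
  · intro i hi
    simp only [Finset.mem_filter, Finset.mem_univ, true_and, Equiv.permCongr_apply,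
      ne_eq, EmbeddingLike.apply_eq_iff_eq] at hi ⊢
    exact hi
  · intro a ha
    simp only [Finset.mem_filter, Finset.mem_univ, true_and, Equiv.permCongr_apply,
      ne_eq, EmbeddingLike.apply_eq_iff_eq, Equiv.symm_apply_apply] at ha ⊢
    exact ha
  · intro i _; simp
  · intro a _; simp

theorem permCongr_mul {α : Type*} [Fintype α] (e : α ≃ Fin (Fintype.card α))
    (σ τ : Equiv.Perm α) :
    e.permCongr σ * e.permCongr τ = e.permCongr (σ * τ) := by
  ext j
  simp [Equiv.permCongr_apply]

theorem permCongr_one {α : Type*} [Fintype α] (e : α ≃ Fin (Fintype.card α)) :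
    e.permCongr (1 : Equiv.Perm α) = 1 := by
  ext j
  simp [Equiv.permCongr_apply]

end SoficAux

open SoficAux in
/-- If a subgroup of finite index is sofic, so is the whole group. -/
theorem isSofic_of_subgroup_finiteIndex {G : Type*} [Group G] (H : Subgroup G)
    (hfin : Finite (G ⧸ H)) (hH : IsSofic H) : IsSofic G := by
  classical
  intro F ε hε
  letI : Fintype (G ⧸ H) := Fintype.ofFinite _
  set FH : Finset H := insert 1 (Finset.image (fun p : G × (G ⧸ H) => cocyc H p.1 p.2)
    (F ×ˢ Finset.univ)) with hFH
  obtain ⟨n, hn, θ, hθmul, hθone, hθsep⟩ := hH FH ε hε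
  have hmemc : ∀ g ∈ F, ∀ q : G ⧸ H, cocyc H g q ∈ FH := by
    intro g hg q
    exact Finset.mem_insert_of_mem (Finset.mem_image.mpr
      ⟨(g, q), Finset.mem_product.mpr ⟨hg, Finset.mem_univ _⟩, rfl⟩)
  set α := (G ⧸ H) × Fin n with hα
  have hQN : 0 < (Fintype.card (G ⧸ H) : ℝ) := by
    exact_mod_cast Fintype.card_pos
  have hnR : 0 < (n : ℝ) := by exact_mod_cast hn
  have hcard : Fintype.card α = Fintype.card (G ⧸ H) * n := by
    simp [hα]
  have hcardR : (Fintype.card α : ℝ) = (Fintype.card (G ⧸ H) : ℝ) * n := by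
    exact_mod_cast congrArg Nat.cast hcard
  have hαpos : 0 < (Fintype.card α : ℝ) := by rw [hcardR]; positivity
  refine ⟨Fintype.card α, ?_, ?_⟩
  · rw [hcard]
    exact Nat.one_le_iff_ne_zero.mpr (Nat.mul_ne_zero Fintype.card_ne_zero (by omega))
  set e : α ≃ Fin (Fintype.card α) := Fintype.equivFin α with he
  refine ⟨fun g => e.permCongr (inducedPerm H θ g), ?_, ?_, ?_⟩
  · -- approximate multiplicativity
    intro g h hg hh hgh
    rw [permCongr_mul, permHammingDist_permCongr, div_lt_iff₀ hαpos]
    rw [card_filter_prod]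
    have hstep : ∀ q : G ⧸ H,
        ((Finset.univ.filter fun i : Fin n =>
          (inducedPerm H θ g * inducedPerm H θ h) (q, i) ≠ inducedPerm H θ (g * h) (q, i)).card : ℝ)
          < ε * n := by
      intro q
      have hdist := hθmul (cocyc H g (h • q)) (cocyc H h q)
        (hmemc g hg (h • q)) (hmemc h hh q)
        (by rw [← cocyc_mul]; exact hmemc (g * h) hgh q)
      rw [permHammingDist, div_lt_iff₀ hnR] at hdist
      refine lt_of_le_of_lt ?_ hdist
      have hset : (Finset.univ.filter fun i : Fin n =>
          (inducedPerm H θ g * inducedPerm H θ h) (q, i) ≠ inducedPerm H θ (g * h) (q, i))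
          = Finset.univ.filter fun i : Fin n =>
            (θ (cocyc H g (h • q)) * θ (cocyc H h q)) i ≠ θ (cocyc H g (h • q) * cocyc H h q) i := by
        refine Finset.filter_congr fun i _ => ?_
        simp only [Equiv.Perm.mul_apply, inducedPerm_apply, cocyc_mul, mul_smul, ne_eq,
          Prod.mk.injEq, true_and, not_and]
      rw [hset]
    calc ((∑ q : G ⧸ H, (Finset.univ.filter fun i : Fin n =>
            (inducedPerm H θ g * inducedPerm H θ h) (q, i) ≠
              inducedPerm H θ (g * h) (q, i)).card : ℕ) : ℝ)
        = ∑ q : G ⧸ H, ((Finset.univ.filter fun i : Fin n =>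
            (inducedPerm H θ g * inducedPerm H θ h) (q, i) ≠
              inducedPerm H θ (g * h) (q, i)).card : ℝ) := by push_cast; ring
      _ < ∑ _q : G ⧸ H, ε * n :=
          Finset.sum_lt_sum_of_nonempty Finset.univ_nonempty fun q _ => hstep q
      _ = ε * Fintype.card α := by
          rw [Finset.sum_const, Finset.card_univ, nsmul_eq_mul, hcardR]; ring
  · -- identity
    intro h1
    rw [← permCongr_one e, permHammingDist_permCongr, div_lt_iff₀ hαpos]
    rw [card_filter_prod]
    have hdist := hθone (Finset.mem_insert_self _ _)
    rw [permHammingDist, div_lt_iff₀ hnR] at hdist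
    have hstep : ∀ q : G ⧸ H,
        ((Finset.univ.filter fun i : Fin n =>
          inducedPerm H θ 1 (q, i) ≠ (1 : Equiv.Perm α) (q, i)).card : ℝ) < ε * n := by
      intro q
      refine lt_of_le_of_lt ?_ hdist
      have hset : (Finset.univ.filter fun i : Fin n =>
          inducedPerm H θ 1 (q, i) ≠ (1 : Equiv.Perm α) (q, i))
          = Finset.univ.filter fun i : Fin n => θ 1 i ≠ (1 : Equiv.Perm (Fin n)) i := by
        refine Finset.filter_congr fun i _ => ?_
        simp [cocyc_one, Prod.ext_iff]
      rw [hset]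
    calc ((∑ q : G ⧸ H, (Finset.univ.filter fun i : Fin n =>
            inducedPerm H θ 1 (q, i) ≠ (1 : Equiv.Perm α) (q, i)).card : ℕ) : ℝ)
        = ∑ q : G ⧸ H, ((Finset.univ.filter fun i : Fin n =>
            inducedPerm H θ 1 (q, i) ≠ (1 : Equiv.Perm α) (q, i)).card : ℝ) := by push_cast; ring
      _ < ∑ _q : G ⧸ H, ε * n :=
          Finset.sum_lt_sum_of_nonempty Finset.univ_nonempty fun q _ => hstep q
      _ = ε * Fintype.card α := by
          rw [Finset.sum_const, Finset.card_univ, nsmul_eq_mul, hcardR]; ring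
  · -- separation
    intro x y hx hy hxy
    rw [permHammingDist_permCongr, le_div_iff₀ hαpos]
    rw [card_filter_prod]
    have hstep : ∀ q : G ⧸ H,
        (1 / 4 : ℝ) * n ≤ ((Finset.univ.filter fun i : Fin n =>
          inducedPerm H θ x (q, i) ≠ inducedPerm H θ y (q, i)).card : ℝ) := by
      intro q
      by_cases hq : x • q = y • q
      · -- first coordinates agree, use separation in `H`
        have hc : cocyc H x q ≠ cocyc H y q := fun hc => hxy (cocyc_injective H hq hc)
        have hdist := hθsep _ _ (hmemc x hx q) (hmemc y hy q) hc
        rw [permHammingDist, le_div_iff₀ hnR] at hdist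
        refine le_trans hdist ?_
        apply Nat.cast_le.mpr
        apply Finset.card_le_card
        intro i hi
        simp only [Finset.mem_filter, Finset.mem_univ, true_and] at hi ⊢
        simp only [inducedPerm_apply, ne_eq, Prod.mk.injEq, not_and]
        intro _
        exact hi
      · -- first coordinates differ everywhere
        have hset : (Finset.univ.filter fun i : Fin n =>
            inducedPerm H θ x (q, i) ≠ inducedPerm H θ y (q, i)) = Finset.univ := by
          refine Finset.filter_true_of_mem fun i _ => ?_
          simp only [inducedPerm_apply, ne_eq, Prod.mk.injEq, not_and]
          intro hcontra
          exact absurd hcontra hq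
        rw [hset, Finset.card_univ, Fintype.card_fin]
        nlinarith
    calc (1 / 4 : ℝ) * Fintype.card α
        = ∑ _q : G ⧸ H, (1 / 4 : ℝ) * n := by
          rw [Finset.sum_const, Finset.card_univ, nsmul_eq_mul, hcardR]; ring
      _ ≤ ∑ q : G ⧸ H, ((Finset.univ.filter fun i : Fin n =>
            inducedPerm H θ x (q, i) ≠ inducedPerm H θ y (q, i)).card : ℝ) :=
          Finset.sum_le_sum fun q _ => hstep q
      _ = ((∑ q : G ⧸ H, (Finset.univ.filter fun i : Fin n =>
            inducedPerm H θ x (q, i) ≠ inducedPerm H θ y (q, i)).card : ℕ) : ℝ) := by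
          push_cast; ring

/-- If the conjugacy class of `x` is finite, the quotient by the centralizer of `x`
is finite. -/
theorem finite_quotient_centralizer {G : Type*} [Group G] {x : G}
    (hfin : ({y : G | IsConj x y}).Finite) :
    Finite (G ⧸ Subgroup.centralizer ({x} : Set G)) := by
  haveI := hfin.to_subtype
  set H := Subgroup.centralizer ({x} : Set G) with hH
  have hresp : ∀ a b : G, Setoid.r (self := QuotientGroup.leftRel H) a b →
      (⟨a * x * a⁻¹, isConj_iff.mpr ⟨a, rfl⟩⟩ : {y : G | IsConj x y}) =
      ⟨b * x * b⁻¹, isConj_iff.mpr ⟨b, rfl⟩⟩ := by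
    intro a b hab
    rw [QuotientGroup.leftRel_apply] at hab
    rw [hH, Subgroup.mem_centralizer_singleton_iff] at hab
    refine Subtype.ext ?_
    show a * x * a⁻¹ = b * x * b⁻¹
    calc a * x * a⁻¹ = a * (x * (a⁻¹ * b)) * b⁻¹ := by group
      _ = a * ((a⁻¹ * b) * x) * b⁻¹ := by rw [hab]
      _ = b * x * b⁻¹ := by group
  let f : G ⧸ H → {y : G | IsConj x y} := Quotient.lift _ hresp
  have hinj : Function.Injective f := by
    intro q1 q2
    induction q1 using Quotient.inductionOn with | h a =>
    induction q2 using Quotient.inductionOn with | h b =>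
    intro hfe
    have heq : a * x * a⁻¹ = b * x * b⁻¹ := congrArg Subtype.val hfe
    refine Quotient.sound (QuotientGroup.leftRel_apply.mpr ?_)
    rw [hH, Subgroup.mem_centralizer_singleton_iff]
    calc (a⁻¹ * b) * x = a⁻¹ * (b * x * b⁻¹) * b := by group
      _ = a⁻¹ * (a * x * a⁻¹) * b := by rw [← heq]
      _ = x * (a⁻¹ * b) := by group
  exact Finite.of_injective f hinj

/-- In a minimal non-sofic group, every non-central element has an infinite
conjugacy class. -/
theorem minimalNonSofic_conjClass_infinite (G : Type*) [Group G]
    (hG : IsMinimalNonSofic G) (x : G) (hx : x ∉ Subgroup.center G) :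
    ({y : G | IsConj x y}).Infinite := by
  by_contra hcon
  rw [Set.not_infinite] at hcon
  have hne : Subgroup.centralizer ({x} : Set G) ≠ ⊤ := by
    intro htop
    apply hx
    rw [Subgroup.mem_center_iff]
    intro g
    have hg : g ∈ Subgroup.centralizer ({x} : Set G) := htop ▸ Subgroup.mem_top g
    rw [Subgroup.mem_centralizer_singleton_iff] at hg
    exact hg
  exact hG.1 (isSofic_of_subgroup_finiteIndex _ (finite_quotient_centralizer hcon)
    (hG.2 _ hne))
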